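/- arXiv:1010.5212 — 2 statements merged into one kernel-verified Lean document; each statement's English description precedes it below -/
import Mathlib

section
/- There exists a c.e. set which is coarsely computable but not generically computable; in fact there exists a simple c.e. set of density 0 (a c.e. set A of density 0 whose complement is infinite and contains no infinite c.e. subset), and any such set is coarsely computable but not generically computable. -/
open Filter

open scoped Classical in
/-- `ρ_n(A) = |A ∩ {0,…,n}| / (n+1)`. -/
noncomputable def partialDensity (A : Set ℕ) (n : ℕ) : ℝ :=
  ((Finset.range (n + 1)).filter (· ∈ A)).card / (n + 1)

/-- The upper density of `A`: `limsup_n ρ_n(A)`. -/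
noncomputable def upperDensity (A : Set ℕ) : ℝ :=
  Filter.limsup (partialDensity A) Filter.atTop

/-- `A` has asymptotic density `r`: `ρ_n(A) → r`. -/
def HasDensity (A : Set ℕ) (r : ℝ) : Prop :=
  Filter.Tendsto (partialDensity A) Filter.atTop (nhds r)

open scoped Classical in
/-- The characteristic function of `A` (with values in `{0,1} ⊆ ℕ`). -/
noncomputable def charFun (A : Set ℕ) : ℕ → ℕ := fun n => if n ∈ A then 1 else 0

/-- `Φ` is a generic description of `A`: `Φ(x) = χ_A(x)` whenever `Φ(x)` is defined,
and the domain of `Φ` has density 1. -/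
def IsGenericDescription (Φ : ℕ →. ℕ) (A : Set ℕ) : Prop :=
  (∀ x m, m ∈ Φ x → m = charFun A x) ∧ HasDensity {x | (Φ x).Dom} 1

/-- `A` is generically computable: some partial computable function is a generic
description of `A`. -/
def GenericallyComputable (A : Set ℕ) : Prop :=
  ∃ Φ : ℕ →. ℕ, Partrec Φ ∧ IsGenericDescription Φ A

/-- `A` is computably enumerable: `A` is the domain of a partial computable function. -/
def CE (A : Set ℕ) : Prop :=
  ∃ f : ℕ →. ℕ, Partrec f ∧ A = {x | (f x).Dom}

/-- `A` is a computable set. -/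
def ComputableSet (A : Set ℕ) : Prop := ComputablePred (· ∈ A)

/-- `A` is immune: infinite, with no infinite c.e. subset. -/
def Immune (A : Set ℕ) : Prop :=
  A.Infinite ∧ ∀ W : Set ℕ, CE W → W.Infinite → ¬W ⊆ A

/-- `A` is bi-immune: both `A` and its complement are immune. -/
def BiImmune (A : Set ℕ) : Prop := Immune A ∧ Immune Aᶜ

/-- `A` and `B` are generically similar: their symmetric difference has density 0. -/
def GenericallySimilar (A B : Set ℕ) : Prop := HasDensity (symmDiff A B) 0

/-- `A` is coarsely computable: generically similar to a computable set. -/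
def CoarselyComputable (A : Set ℕ) : Prop :=
  ∃ C : Set ℕ, ComputableSet C ∧ GenericallySimilar A C

/-- `R_k = {m : 2^k ∣ m, 2^(k+1) ∤ m}`. -/
def Rset (k : ℕ) : Set ℕ := {m | 2 ^ k ∣ m ∧ ¬2 ^ (k + 1) ∣ m}

/-- `R(A) = ⋃_{n ∈ A} R_n`. -/
def RofSet (A : Set ℕ) : Set ℕ := ⋃ n ∈ A, Rset n

/-- Partial functions `ℕ →. ℕ` computable relative to a (total) oracle `O : ℕ → ℕ`. -/
inductive RecursiveInOracle (O : ℕ → ℕ) : (ℕ →. ℕ) → Prop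
  | zero : RecursiveInOracle O (pure 0)
  | succ : RecursiveInOracle O fun n => Part.some (n + 1)
  | left : RecursiveInOracle O fun n => Part.some (Nat.unpair n).1
  | right : RecursiveInOracle O fun n => Part.some (Nat.unpair n).2
  | oracle : RecursiveInOracle O fun n => Part.some (O n)
  | pair {f g : ℕ →. ℕ} : RecursiveInOracle O f → RecursiveInOracle O g →
      RecursiveInOracle O fun n => Nat.pair <$> f n <*> g n
  | comp {f g : ℕ →. ℕ} : RecursiveInOracle O f → RecursiveInOracle O g →
      RecursiveInOracle O fun n => g n >>= f
  | prec {f g : ℕ →. ℕ} : RecursiveInOracle O f → RecursiveInOracle O g →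
      RecursiveInOracle O (Nat.unpaired fun a n =>
        n.rec (f a) fun y IH => do let i ← IH; g (Nat.pair a (Nat.pair y i)))
  | rfind {f : ℕ →. ℕ} : RecursiveInOracle O f →
      RecursiveInOracle O fun a => Nat.rfind fun n => (fun m => m = 0) <$> f (Nat.pair a n)

/-- `A ≤_T B`: the characteristic function of `A` is computable relative to `B`. -/
def TuringReducibleSet (A B : Set ℕ) : Prop :=
  RecursiveInOracle (charFun B) fun n => Part.some (charFun A n)

/-- `A ≡_T B`. -/
def TuringEquivalentSet (A B : Set ℕ) : Prop :=
  TuringReducibleSet A B ∧ TuringReducibleSet B A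

/-!
Post's construction: the `e`-th partial computable function `φ_e` contributes to `A` the first
`x > 2 ^ e` found, by a dovetailed search, on which it halts. Then `A` is c.e. and meets every
infinite c.e. set. Each `e` contributes at most one element and only `e ≤ log₂ n` can contribute
an element `≤ n`, so `|A ∩ [0, n]| ≤ log₂ n + 1` and `A` has density 0.

A set of density 0 is generically similar to `∅`. If `Φ` were a generic description of a simple
set `A` of density 0, then `{x | Φ x = 0}` would be a c.e. subset of `Aᶜ` containing
`dom Φ \ A`, which is infinite because `dom Φ` has density 1.
-/

open Nat.Partrec (Code)
open Nat.Partrec.Code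

theorem ce_setOf_exists {R : ℕ → ℕ → Prop} (hR : PrimrecRel R) : CE {x | ∃ n, R x n} := by
  classical
  have hR' : PrimrecRel fun (a : ℕ × ℕ) (n : ℕ) => R a.1 n :=
    hR.comp (Primrec.fst.comp Primrec.fst) Primrec.snd
  refine ⟨fun x => Nat.rfindOpt fun n => Option.guard (R x) n,
    Partrec.rfindOpt (Primrec.option_guard hR' Primrec.snd).to_comp, ?_⟩
  ext x
  simp [Nat.rfindOpt_dom]

theorem Partrec.ce_range {f : ℕ →. ℕ} (hf : Partrec f) : CE {y | ∃ x, y ∈ f x} := by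
  obtain ⟨c, rfl⟩ := exists_code.1 (Partrec.nat_iff.1 hf)
  have hunpair : Primrec fun p : ℕ × ℕ => p.2.unpair := Primrec.unpair.comp Primrec.snd
  have hR : PrimrecRel fun (y n : ℕ) => evaln n.unpair.1 c n.unpair.2 = some y :=
    Primrec.eq.comp
      (primrec_evaln.comp (((Primrec.fst.comp hunpair).pair (Primrec.const c)).pair
        (Primrec.snd.comp hunpair)))
      (Primrec.option_some.comp Primrec.fst)
  convert ce_setOf_exists hR using 1
  ext y
  simp only [Set.mem_ofPred_eq, evaln_complete]
  constructor
  · rintro ⟨x, k, h⟩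
    exact ⟨Nat.pair k x, by simpa using h⟩
  · rintro ⟨n, h⟩
    exact ⟨n.unpair.2, n.unpair.1, h⟩

theorem Partrec.ce_setOf_mem {f : ℕ →. ℕ} (hf : Partrec f) (y : ℕ) : CE {x | y ∈ f x} := by
  obtain ⟨c, rfl⟩ := exists_code.1 (Partrec.nat_iff.1 hf)
  have hR : PrimrecRel fun (x k : ℕ) => evaln k c x = some y :=
    Primrec.eq.comp (primrec_evaln.comp ((Primrec.snd.pair (Primrec.const c)).pair Primrec.fst))
      (Primrec.const _)
  simpa only [evaln_complete, Option.mem_def] using ce_setOf_exists hR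

theorem computableSet_empty : ComputableSet (∅ : Set ℕ) :=
  ComputablePred.computable_iff.2 ⟨fun _ => false, Computable.const false, by ext; simp⟩

section Density

open Finset

theorem partialDensity_nonneg (A : Set ℕ) (n : ℕ) : 0 ≤ partialDensity A n := by
  unfold partialDensity; positivity

open scoped Classical in
theorem partialDensity_mono {A B : Set ℕ} (h : A ⊆ B) (n : ℕ) :
    partialDensity A n ≤ partialDensity B n := by
  unfold partialDensity
  gcongr

open scoped Classical in
theorem partialDensity_union_le (A B : Set ℕ) (n : ℕ) :
    partialDensity (A ∪ B) n ≤ partialDensity A n + partialDensity B n := by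
  unfold partialDensity
  rw [← add_div, ← Nat.cast_add]
  gcongr
  refine (card_le_card ?_).trans (card_union_le _ _)
  intro x
  simp only [mem_filter, mem_union, Set.mem_union]
  tauto

theorem hasDensity_univ : HasDensity Set.univ 1 := by
  refine tendsto_const_nhds.congr fun n => ?_
  have hn : (n : ℝ) + 1 ≠ 0 := by positivity
  simp [partialDensity, hn]

open scoped Classical in
theorem Set.Finite.hasDensity_zero {S : Set ℕ} (hS : S.Finite) : HasDensity S 0 := by
  have hle (n : ℕ) : partialDensity S n ≤ #hS.toFinset * (1 / ((n : ℝ) + 1)) := by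
    rw [mul_one_div, partialDensity]
    gcongr
    intro x hx
    exact hS.mem_toFinset.mpr (mem_filter.mp hx).2
  have hlim := tendsto_one_div_add_atTop_nhds_zero_nat.const_mul (#hS.toFinset : ℝ)
  rw [mul_zero] at hlim
  exact squeeze_zero (partialDensity_nonneg S) hle hlim

theorem HasDensity.infinite_diff {A B : Set ℕ} (hB : HasDensity B 1) (hA : HasDensity A 0) :
    (B \ A).Infinite := by
  intro hfin
  have hle (n : ℕ) : partialDensity B n ≤ partialDensity A n + partialDensity (B \ A) n :=
    (partialDensity_mono (by simp) n).trans (partialDensity_union_le A (B \ A) n)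
  have : (1 : ℝ) ≤ 0 + 0 := le_of_tendsto_of_tendsto' hB (hA.add hfin.hasDensity_zero) hle
  norm_num at this

theorem HasDensity.infinite_compl {A : Set ℕ} (hA : HasDensity A 0) : Aᶜ.Infinite := by
  simpa [Set.compl_eq_univ_sdiff] using hasDensity_univ.infinite_diff hA

theorem tendsto_natLog_add_one_div :
    Tendsto (fun n : ℕ => ((Nat.log 2 n : ℝ) + 1) / ((n : ℝ) + 1)) atTop (nhds 0) := by
  have hlog : Tendsto (fun n : ℕ => Real.log n / ((n : ℝ) + 1)) atTop (nhds 0) := by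
    simpa [Function.comp_def] using
      (Real.tendsto_pow_log_div_mul_add_atTop 1 1 1 one_ne_zero).comp tendsto_natCast_atTop_atTop
  have hsum := (hlog.const_mul (Real.log 2)⁻¹).add tendsto_one_div_add_atTop_nhds_zero_nat
  rw [mul_zero, add_zero] at hsum
  refine squeeze_zero (fun n => by positivity) (fun n => ?_) hsum
  have hnatLog : (Nat.log 2 n : ℝ) ≤ (Real.log 2)⁻¹ * Real.log n := by
    simpa [Real.logb, div_eq_inv_mul] using Real.natLog_le_logb n 2
  rw [add_div, ← mul_div_assoc]
  gcongr

end Density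

theorem HasDensity.coarselyComputable {A : Set ℕ} (hA : HasDensity A 0) :
    CoarselyComputable A :=
  ⟨∅, computableSet_empty, by rwa [GenericallySimilar, ← Set.bot_eq_empty, symmDiff_bot]⟩

theorem HasDensity.not_genericallyComputable {A : Set ℕ} (hA : HasDensity A 0)
    (hImm : Immune Aᶜ) : ¬GenericallyComputable A := by
  rintro ⟨Φ, hΦ, hdesc, hdom⟩
  have hzero_compl : {x | 0 ∈ Φ x} ⊆ Aᶜ := fun x hx hxA => by
    simpa [charFun, hxA] using hdesc x 0 hx
  have hdom_diff : {x | (Φ x).Dom} \ A ⊆ {x | 0 ∈ Φ x} := fun x ⟨hx, hxA⟩ => by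
    have hget := hdesc x _ (Part.get_mem hx)
    simp only [charFun, hxA, if_false] at hget
    exact hget ▸ Part.get_mem hx
  exact hImm.2 _ (hΦ.ce_setOf_mem 0) ((hdom.infinite_diff hA).mono hdom_diff) hzero_compl

/-- Stage `n.unpair.1` of the search for machine `e`, on the argument `n.unpair.2`. -/
def postSearch (e n : ℕ) : Option ℕ :=
  if (evaln n.unpair.1 (Denumerable.ofNat Code e) n.unpair.2).isSome ∧ 2 ^ e < n.unpair.2 then
    some n.unpair.2
  else none

theorem primrec₂_postSearch : Primrec₂ postSearch := by
  have hunpair : Primrec fun p : ℕ × ℕ => p.2.unpair := Primrec.unpair.comp Primrec.snd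
  have harg : Primrec fun p : ℕ × ℕ => p.2.unpair.2 := Primrec.snd.comp hunpair
  refine Primrec.ite (PrimrecPred.and ?_ ?_) (Primrec.option_some.comp harg) (Primrec.const none)
  · exact Primrec.eq.comp (Primrec.option_isSome.comp (primrec_evaln.comp
      (((Primrec.fst.comp hunpair).pair ((Primrec.ofNat Code).comp Primrec.fst)).pair harg)))
      (Primrec.const true)
  · exact Primrec.nat_lt.comp
      ((Primrec₂.unpaired'.1 Nat.Primrec.pow).comp (Primrec.const 2) Primrec.fst) harg

def postPick (e : ℕ) : Part ℕ := Nat.rfindOpt (postSearch e)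

def postSet : Set ℕ := {x | ∃ e, x ∈ postPick e}

theorem ce_postSet : CE postSet := (Partrec.rfindOpt primrec₂_postSearch.to_comp).ce_range

theorem mem_postPick {e x : ℕ} (h : x ∈ postPick e) :
    2 ^ e < x ∧ ((Denumerable.ofNat Code e).eval x).Dom := by
  obtain ⟨n, hn⟩ := Nat.rfindOpt_spec h
  simp only [postSearch, Option.mem_def, Option.ite_none_right_eq_some, Option.some.injEq] at hn
  obtain ⟨⟨hs, hlt⟩, rfl⟩ := hn
  obtain ⟨y, hy⟩ := Option.isSome_iff_exists.mp hs
  exact ⟨hlt, Part.dom_iff_mem.mpr ⟨y, evaln_sound hy⟩⟩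

theorem postPick_dom {e x : ℕ} (hx : ((Denumerable.ofNat Code e).eval x).Dom)
    (hlt : 2 ^ e < x) : (postPick e).Dom := by
  obtain ⟨y, hy⟩ := Part.dom_iff_mem.mp hx
  obtain ⟨k, hk⟩ := evaln_complete.mp hy
  refine Nat.rfindOpt_dom.2 ⟨Nat.pair k x, x, ?_⟩
  simp [postSearch, Option.isSome_iff_exists.mpr ⟨y, hk⟩, hlt]

open scoped Classical in
theorem card_postSet_inter_range_le (n : ℕ) :
    ((Finset.range (n + 1)).filter (· ∈ postSet)).card ≤ Nat.log 2 n + 1 := by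
  rw [← Finset.card_range (Nat.log 2 n + 1)]
  refine Finset.card_le_card_of_forall_subsingleton (fun x e => x ∈ postPick e) ?_ ?_
  · intro x hx
    obtain ⟨hxn, e, he⟩ := Finset.mem_filter.mp hx
    refine ⟨e, Finset.mem_range_succ_iff.mpr ?_, he⟩
    exact Nat.le_log_of_pow_le one_lt_two
      ((mem_postPick he).1.le.trans (Finset.mem_range_succ_iff.mp hxn))
  · intro e _ x hx y hy
    exact Part.mem_unique hx.2 hy.2

theorem hasDensity_postSet : HasDensity postSet 0 := by
  refine squeeze_zero (partialDensity_nonneg postSet) (fun n => ?_) tendsto_natLog_add_one_div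
  rw [partialDensity]
  gcongr
  exact_mod_cast card_postSet_inter_range_le n

theorem immune_compl_postSet : Immune postSetᶜ := by
  refine ⟨hasDensity_postSet.infinite_compl, ?_⟩
  rintro W ⟨f, hf, rfl⟩ hW hWA
  obtain ⟨c, rfl⟩ := exists_code.mp (Partrec.nat_iff.mp hf)
  obtain ⟨x, hxW, hx⟩ := hW.exists_gt (2 ^ Encodable.encode c)
  rw [← Denumerable.ofNat_encode c] at hxW hWA
  obtain ⟨y, hy⟩ := Part.dom_iff_mem.mp (postPick_dom hxW hx)
  exact hWA (mem_postPick hy).2 ⟨_, hy⟩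

/-- there exists a simple c.e. set of density 0, and any such set is
coarsely computable but not generically computable. -/
theorem stmt9 :
    (∃ A : Set ℕ, CE A ∧ HasDensity A 0 ∧ Immune Aᶜ) ∧
      ∀ A : Set ℕ, CE A → HasDensity A 0 → Immune Aᶜ →
        CoarselyComputable A ∧ ¬GenericallyComputable A :=
  ⟨⟨postSet, ce_postSet, hasDensity_postSet, immune_compl_postSet⟩,
    fun _ _ hA hImm => ⟨hA.coarselyComputable, hA.not_genericallyComputable hImm⟩⟩
end

section
/- A set A ⊆ ℕ has a generic description by a partial computable function whose domain is computable if and only if A is densely approximable by computable sets, i.e. there exist computable sets C₀ ⊆ ℕ \ A and C₁ ⊆ A with C₀ ∪ C₁ of density 1. -/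
open Filter

/-!
A partial computable function with computable domain `D` is, on `D`, a total computable
function, so `{x | b ∈ Φ x}` is computable for each value `b`; for a generic description of `A`
the sets for `b = 0` and `b = 1` lie in `Aᶜ` and `A` and cover `D`. Conversely, from `C₀` and
`C₁` one takes `χ_{C₁}` restricted to `C₀ ∪ C₁`, which agrees with `χ_A` there.
-/

section Computability

variable {α σ : Type*} [Primcodable α] [Primcodable σ]

theorem ComputablePred.or {p q : α → Prop} (hp : ComputablePred p) (hq : ComputablePred q) :
    ComputablePred fun a => p a ∨ q a := by
  obtain ⟨_, hp⟩ := hp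
  obtain ⟨_, hq⟩ := hq
  exact Computable.computablePred <| (Primrec.or.to_comp.comp hp hq).of_eq fun a => by simp

theorem ComputablePred.and {p q : α → Prop} (hp : ComputablePred p) (hq : ComputablePred q) :
    ComputablePred fun a => p a ∧ q a := by
  obtain ⟨_, hp⟩ := hp
  obtain ⟨_, hq⟩ := hq
  exact Computable.computablePred <| (Primrec.and.to_comp.comp hp hq).of_eq fun a => by simp

theorem Partrec.res {g : α → σ} {s : Set α} (hg : Computable g) (hs : ComputablePred (· ∈ s)) :
    Partrec (PFun.res g s) := by
  classical
  refine (Partrec.cond hs.decide hg.partrec Partrec.none).of_eq fun a => Part.ext fun b => ?_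
  by_cases ha : a ∈ s <;> simp [PFun.mem_res, ha, eq_comm]

theorem ComputablePred.mem_of_partrec [DecidableEq σ] {f : α →. σ} (hf : Partrec f)
    (hdom : ComputablePred fun a => (f a).Dom) (b : σ) : ComputablePred fun a => b ∈ f a := by
  obtain ⟨d, hd, hd_eq⟩ := ComputablePred.computable_iff.1 hdom
  have hdom_iff : ∀ a, (f a).Dom ↔ d a = true := fun a => (congrFun hd_eq a).to_iff
  -- returning `b` off the domain makes `f'` total, and `b ∈ f a ↔ a ∈ dom ∧ f' a = b`
  let f' : α →. σ := fun a => bif d a then f a else Part.some b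
  have hf'_dom : ∀ a, (f' a).Dom := fun a => by
    cases h : d a
    · simp [f', h]
    · simpa [f', h] using (hdom_iff a).2 h
  have hg : Computable fun a => (f' a).get (hf'_dom a) :=
    (Partrec.cond hd hf (Computable.const b).partrec).of_eq_tot fun a => Part.get_mem _
  refine (ComputablePred.and (ComputablePred.computable_iff.2 ⟨d, hd, rfl⟩)
    (Computable.computablePred (Primrec.eq.decide.to_comp.comp hg (Computable.const b)))).of_eq
    fun a => ?_
  cases h : d a
  · have hb : b ∉ f a := fun hb => by simpa [h] using (hdom_iff a).1 (Part.dom_iff_mem.2 ⟨b, hb⟩)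
    simp [hb]
  · simp [f', h, Part.get_eq_iff_mem]

end Computability

theorem charFun_eq_one_iff {A : Set ℕ} {x : ℕ} : charFun A x = 1 ↔ x ∈ A := by
  by_cases hx : x ∈ A <;> simp [charFun, hx]

theorem charFun_eq_zero_iff {A : Set ℕ} {x : ℕ} : charFun A x = 0 ↔ x ∉ A := by
  by_cases hx : x ∈ A <;> simp [charFun, hx]

theorem charFun_eq_zero_or_one (A : Set ℕ) (x : ℕ) : charFun A x = 0 ∨ charFun A x = 1 := by
  by_cases hx : x ∈ A <;> simp [charFun, hx]

theorem ComputableSet.computable_charFun {C : Set ℕ} (hC : ComputableSet C) :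
    Computable (charFun C) := by
  classical
  exact (Computable.cond hC.decide (Computable.const 1) (Computable.const 0)).of_eq fun x => by
    by_cases hx : x ∈ C <;> simp [charFun, hx]

theorem charFun_eq_of_mem_union {A C₀ C₁ : Set ℕ} (h₀ : C₀ ⊆ Aᶜ) (h₁ : C₁ ⊆ A) {x : ℕ}
    (hx : x ∈ C₀ ∪ C₁) : charFun C₁ x = charFun A x := by
  rcases hx with hx | hx
  · have hxA : x ∉ A := h₀ hx
    have hxC₁ : x ∉ C₁ := fun h => hxA (h₁ h)
    simp [charFun, hxA, hxC₁]
  · simp [charFun, hx, h₁ hx]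

theorem setOf_zero_mem_union_setOf_one_mem_eq_dom {Φ : ℕ →. ℕ} {A : Set ℕ}
    (hval : ∀ x m, m ∈ Φ x → m = charFun A x) :
    {x | 0 ∈ Φ x} ∪ {x | 1 ∈ Φ x} = {x | (Φ x).Dom} := by
  ext x
  constructor
  · rintro (hx | hx) <;> exact Part.dom_iff_mem.2 ⟨_, hx⟩
  · intro hx
    have hget : (Φ x).get hx ∈ Φ x := Part.get_mem hx
    rw [hval x _ hget] at hget
    rcases charFun_eq_zero_or_one A x with h | h
    · exact Or.inl (h ▸ hget)
    · exact Or.inr (h ▸ hget)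

/-- `A` has a partial computable generic description with computable
domain iff `A` is densely approximable by computable sets. -/
theorem stmt16 (A : Set ℕ) :
    (∃ Φ : ℕ →. ℕ, Partrec Φ ∧ IsGenericDescription Φ A ∧
        ComputableSet {x | (Φ x).Dom}) ↔
      ∃ C₀ C₁ : Set ℕ, ComputableSet C₀ ∧ ComputableSet C₁ ∧ C₀ ⊆ Aᶜ ∧ C₁ ⊆ A ∧
        HasDensity (C₀ ∪ C₁) 1 := by
  constructor
  · rintro ⟨Φ, hΦ, ⟨hval, hdens⟩, hdom⟩
    refine ⟨{x | 0 ∈ Φ x}, {x | 1 ∈ Φ x}, ComputablePred.mem_of_partrec hΦ hdom 0,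
      ComputablePred.mem_of_partrec hΦ hdom 1, fun x hx => ?_, fun x hx => ?_, ?_⟩
    · exact charFun_eq_zero_iff.1 (hval x 0 hx).symm
    · exact charFun_eq_one_iff.1 (hval x 1 hx).symm
    · rwa [setOf_zero_mem_union_setOf_one_mem_eq_dom hval]
  · rintro ⟨C₀, C₁, h₀, h₁, hsub₀, hsub₁, hdens⟩
    refine ⟨PFun.res (charFun C₁) (C₀ ∪ C₁), Partrec.res h₁.computable_charFun (h₀.or h₁),
      ⟨fun x m hm => ?_, hdens⟩, h₀.or h₁⟩
    obtain ⟨hx, rfl⟩ := (PFun.mem_res _ _ _ _).1 hm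
    exact charFun_eq_of_mem_union hsub₀ hsub₁ hx
end
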